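/- Suppose (θ_n)_{n≥1} is a BMM sequence with surrogates (g_n^i) and optimality gaps (Δ_n) for f started at θ_0, where each g_n^i is differentiable with L_g-Lipschitz gradient for a common constant L_g ≥ 0 and there exist c > 0 and a strictly increasing function φ : [0,∞) → ℝ with φ(0) = 0 such that g_n^i(θ) − f_n^i(θ) ≥ c·φ(‖θ − θ_{n−1}^i‖) for all n, i and θ ∈ E_i. Assume Σ_{n≥1} Δ_n < ∞, the sublevel set {θ ∈ Θ : f(θ) ≤ a} is compact for every a ∈ ℝ, each g_n^i attains its minimum over Θ_i at some θ_n^{i⋆} ∈ Θ_i, and ‖θ_n^{i⋆} − θ_n^i‖ → 0 as n → ∞. Then every limit point of (θ_n)_{n≥0} is a stationary point of f over Θ. -/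

import Mathlib

/-!
Every block update lowers `f` up to `Δ_n`, and because the surrogate exceeds the marginal by
`c φ(‖θ - θ_{n-1}^i‖)`, the decrease dominates `c φ(‖θ_n^i - θ_{n-1}^i‖)`. As `f` is bounded
below and `∑ Δ_n < ∞`, these terms are summable, so consecutive iterates merge: along a
subsequence `θ_{ψ k} → θ̄` also `θ_{ψ k - 1} → θ̄` and `θ_{ψ k}^{i⋆} → θ̄^i`. The surrogate touches
the marginal from above at `θ_{n-1}^i`, so their gradients agree there; by the two Lipschitz
bounds the surrogate gradient at `θ_n^{i⋆}` tends to `∇_i f(θ̄)`, and the first-order condition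
of `θ_n^{i⋆}` on the convex set `Θ_i` passes to the limit.
-/

open Filter RealInnerProductSpace

/-- The point of the product space whose first `i-1` blocks are those of `θ n`, whose
`i`-th block is `v`, and whose remaining blocks are those of `θ (n-1)`.  Thus the `i`-th
marginal objective at cycle `n` is `fun v => f (mixPt θ n i v)`. -/
def mixPt {m : ℕ} {X : Fin m → Type*} (θ : ℕ → ∀ i, X i) (n : ℕ) (i : Fin m)
    (v : X i) : ∀ j, X j :=
  Function.update (fun j => if (j : ℕ) < (i : ℕ) then θ n j else θ (n - 1) j) i v

/-- The `i`-th block partial gradient `∇_i f(x)`: the gradient at `x i` of the map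
`u ↦ f (x with i-th block replaced by u)`. -/
noncomputable def gradi {m : ℕ} {E : Fin m → Type*} [∀ i, NormedAddCommGroup (E i)]
    [∀ i, InnerProductSpace ℝ (E i)] [∀ i, CompleteSpace (E i)]
    (f : (∀ i, E i) → ℝ) (x : ∀ i, E i) (i : Fin m) : E i :=
  gradient (fun u => f (Function.update x i u)) (x i)

open Topology

section Calculus

variable {F : Type*} [NormedAddCommGroup F] [InnerProductSpace ℝ F] [CompleteSpace F]

theorem inner_gradient_sub_nonneg_of_isMinOn {s : Set F} (hs : Convex ℝ s) {g : F → ℝ} {a u : F}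
    (hg : DifferentiableAt ℝ g a) (hmin : IsMinOn g s a) (ha : a ∈ s) (hu : u ∈ s) :
    0 ≤ ⟪gradient g a, u - a⟫ := by
  rw [inner_gradient_left]
  exact hmin.localize.hasFDerivWithinAt_nonneg hg.hasFDerivAt.hasFDerivWithinAt
    (sub_mem_posTangentConeAt_of_segment_subset (hs.segment_subset ha hu))

theorem gradient_eq_of_eventually_le_of_eq {p q : F → ℝ} {a : F} (hp : DifferentiableAt ℝ p a)
    (hq : DifferentiableAt ℝ q a) (hle : ∀ᶠ v in 𝓝 a, q v ≤ p v) (heq : p a = q a) :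
    gradient p a = gradient q a := by
  have hmin : IsLocalMin (p - q) a := by
    filter_upwards [hle] with v hv
    simp only [Pi.sub_apply, heq, sub_self, sub_nonneg, hv]
  have hzero := hmin.fderiv_eq_zero
  rw [fderiv_sub hp hq, sub_eq_zero] at hzero
  rw [gradient, gradient, hzero]

end Calculus

theorem summable_sub_succ_add {u δ : ℕ → ℝ} {b : ℝ} (hu : ∀ n, b ≤ u n) (hδ : Summable δ)
    (hδ0 : ∀ n, 0 ≤ δ n) (hnonneg : ∀ n, 0 ≤ u n - u (n + 1) + δ n) :
    Summable fun n => u n - u (n + 1) + δ n := by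
  refine summable_of_sum_range_le hnonneg (c := u 0 - b + ∑' n, δ n) fun N => ?_
  rw [Finset.sum_add_distrib, Finset.sum_range_sub']
  linarith [hu N, hδ.sum_le_tsum (Finset.range N) fun n _ => hδ0 n]

theorem StrictMonoOn.tendsto_zero_of_tendsto_comp {α : Type*} {l : Filter α} {φ : ℝ → ℝ}
    (hφ : StrictMonoOn φ (Set.Ici 0)) (hφ0 : φ 0 = 0) {x : α → ℝ} (hx : ∀ a, 0 ≤ x a)
    (hlim : Tendsto (fun a => φ (x a)) l (𝓝 0)) : Tendsto x l (𝓝 0) := by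
  refine tendsto_order.2 ⟨fun b hb => Eventually.of_forall fun a => hb.trans_le (hx a),
    fun ε hε => ?_⟩
  have hφε : 0 < φ ε := hφ0 ▸ hφ Set.self_mem_Ici hε.le hε
  filter_upwards [hlim.eventually (gt_mem_nhds hφε)] with a ha
  exact (hφ.lt_iff_lt (hx a) hε.le).1 ha

theorem Filter.Tendsto.comp_pred {G : Type*} [TopologicalSpace G] [AddCommGroup G]
    [IsTopologicalAddGroup G] {x : ℕ → G} {a : G} {ψ : ℕ → ℕ}
    (ha : Tendsto (fun k => x (ψ k)) atTop (𝓝 a)) (hψ : Tendsto ψ atTop atTop)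
    (hx : Tendsto (fun n => x (n + 1) - x n) atTop (𝓝 0)) :
    Tendsto (fun k => x (ψ k - 1)) atTop (𝓝 a) := by
  have hstep : Tendsto (fun k => x (ψ k - 1 + 1) - x (ψ k - 1)) atTop (𝓝 0) :=
    hx.comp ((tendsto_sub_atTop_nat 1).comp hψ)
  have hlim : Tendsto (fun k => x (ψ k) - (x (ψ k - 1 + 1) - x (ψ k - 1))) atTop (𝓝 a) := by
    simpa using ha.sub hstep
  refine hlim.congr' ?_
  filter_upwards [hψ.eventually_ge_atTop 1] with k hk
  simp [Nat.sub_add_cancel hk]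

theorem continuous_of_norm_sub_le_mul_sqrt_sum {ι : Type*} [Fintype ι] {E : ι → Type*}
    [∀ i, SeminormedAddCommGroup (E i)] {G : Type*} [SeminormedAddCommGroup G]
    {F : (∀ i, E i) → G} {L : ℝ} (hF : ∀ x y, ‖F x - F y‖ ≤ L * √(∑ i, ‖x i - y i‖ ^ 2)) :
    Continuous F := by
  refine continuous_iff_continuousAt.2 fun y => tendsto_iff_norm_sub_tendsto_zero.2 ?_
  have hbound : Continuous fun x : ∀ i, E i => L * √(∑ i, ‖x i - y i‖ ^ 2) := by fun_prop
  exact squeeze_zero (fun _ => norm_nonneg _) (fun x => hF x y) (by simpa using hbound.tendsto y)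

/-- `sweepPt θ n k` is the iterate of cycle `n` after its first `k` block updates. -/
def sweepPt {m : ℕ} {X : Fin m → Type*} (θ : ℕ → ∀ i, X i) (n k : ℕ) : ∀ j, X j :=
  fun j => if (j : ℕ) < k then θ n j else θ (n - 1) j

section Sweep

variable {m : ℕ} {X : Fin m → Type*} (θ : ℕ → ∀ i, X i) (n : ℕ) (i : Fin m)

theorem mixPt_update (v u : X i) :
    Function.update (mixPt θ n i v) i u = mixPt θ n i u := by
  simp [mixPt]

theorem mixPt_self (v : X i) : mixPt θ n i v i = v := by
  simp [mixPt]

theorem mixPt_prev : mixPt θ n i (θ (n - 1) i) = sweepPt θ n i := by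
  ext j
  rcases eq_or_ne j i with rfl | hj
  · simp [mixPt, sweepPt]
  · simp [mixPt, sweepPt, hj]

theorem mixPt_curr : mixPt θ n i (θ n i) = sweepPt θ n (i + 1) := by
  ext j
  rcases eq_or_ne j i with rfl | hj
  · simp [mixPt, sweepPt]
  · have hlt : (j : ℕ) < i + 1 ↔ (j : ℕ) < i := by
      rw [Nat.lt_succ_iff, Nat.le_iff_lt_or_eq, or_iff_left (Fin.val_ne_of_ne hj)]
    simp [mixPt, sweepPt, hj, hlt]

theorem sweepPt_zero : sweepPt θ n 0 = θ (n - 1) := by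
  ext j
  simp [sweepPt]

theorem sweepPt_top : sweepPt θ n m = θ n := by
  ext j
  simp [sweepPt]

theorem tendsto_sweepPt [∀ i, TopologicalSpace (X i)] {ι : Type*} {l : Filter ι} {ν : ι → ℕ}
    {a : ∀ i, X i} (hcurr : Tendsto (fun k => θ (ν k)) l (𝓝 a))
    (hprev : Tendsto (fun k => θ (ν k - 1)) l (𝓝 a)) (K : ℕ) :
    Tendsto (fun k => sweepPt θ (ν k) K) l (𝓝 a) := by
  refine tendsto_pi_nhds.2 fun j => ?_
  by_cases hj : (j : ℕ) < K
  · simpa only [sweepPt, hj, if_true] using tendsto_pi_nhds.1 hcurr j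
  · simpa only [sweepPt, hj, if_false] using tendsto_pi_nhds.1 hprev j

end Sweep

section BlockDescent

variable {m : ℕ} {E : Fin m → Type*} [∀ i, NormedAddCommGroup (E i)]
  {f : (∀ i, E i) → ℝ} {θ : ℕ → ∀ i, E i} {g : ℕ → ∀ i : Fin m, E i → ℝ} {Δ : ℕ → ℝ}
  {c : ℝ} {φ : ℝ → ℝ}

theorem sum_gap_le_cycle_decrease {n : ℕ}
    (hsharp : ∀ i, g n i (θ (n - 1) i) = f (mixPt θ n i (θ (n - 1) i)))
    (hopt : ∀ i, g n i (θ n i) ≤ g n i (θ (n - 1) i) + Δ n)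
    (hgap : ∀ i, c * φ ‖θ n i - θ (n - 1) i‖ ≤ g n i (θ n i) - f (mixPt θ n i (θ n i))) :
    ∑ i, c * φ ‖θ n i - θ (n - 1) i‖ ≤ f (θ (n - 1)) - f (θ n) + m * Δ n := by
  have hstep : ∀ i : Fin m, c * φ ‖θ n i - θ (n - 1) i‖ ≤
      f (sweepPt θ n i) - f (sweepPt θ n (i + 1)) + Δ n := fun i => by
    have hgap_i := hgap i
    have hopt_i := hopt i
    rw [mixPt_curr] at hgap_i
    rw [hsharp, mixPt_prev] at hopt_i
    linarith
  calc ∑ i, c * φ ‖θ n i - θ (n - 1) i‖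
      ≤ ∑ i : Fin m, (f (sweepPt θ n i) - f (sweepPt θ n (i + 1)) + Δ n) :=
        Finset.sum_le_sum fun i _ => hstep i
    _ = f (θ (n - 1)) - f (θ n) + m * Δ n := by
        rw [Fin.sum_univ_eq_sum_range (fun j => f (sweepPt θ n j) - f (sweepPt θ n (j + 1)) + Δ n),
          Finset.sum_add_distrib, Finset.sum_range_sub', sweepPt_zero, sweepPt_top]
        simp

theorem tendsto_succ_sub_of_gap (hc : 0 < c) (hφ : StrictMonoOn φ (Set.Ici 0)) (hφ0 : φ 0 = 0)
    {fstar : ℝ} (hbdd : ∀ x, fstar ≤ f x) (hΔ : ∀ n, 1 ≤ n → 0 ≤ Δ n)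
    (hΔsum : Summable fun n => Δ (n + 1))
    (hsharp : ∀ n, 1 ≤ n → ∀ i, g n i (θ (n - 1) i) = f (mixPt θ n i (θ (n - 1) i)))
    (hopt : ∀ n, 1 ≤ n → ∀ i, g n i (θ n i) ≤ g n i (θ (n - 1) i) + Δ n)
    (hgap : ∀ n, 1 ≤ n → ∀ i, ∀ v : E i,
      c * φ ‖v - θ (n - 1) i‖ ≤ g n i v - f (mixPt θ n i v)) :
    Tendsto (fun n => θ (n + 1) - θ n) atTop (𝓝 0) := by
  have hgap_nonneg : ∀ n i, 0 ≤ c * φ ‖θ (n + 1) i - θ n i‖ := fun n i =>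
    mul_nonneg hc.le (hφ0 ▸ hφ.monotoneOn Set.self_mem_Ici (norm_nonneg _) (norm_nonneg _))
  have hdecrease : ∀ n, ∑ i, c * φ ‖θ (n + 1) i - θ n i‖ ≤
      f (θ n) - f (θ (n + 1)) + m * Δ (n + 1) := fun n => by
    simpa using sum_gap_le_cycle_decrease (hsharp (n + 1) n.succ_pos) (hopt (n + 1) n.succ_pos)
      fun i => hgap (n + 1) n.succ_pos i _
  have hlim := (summable_sub_succ_add (u := fun n => f (θ n)) (fun n => hbdd _)
    (hΔsum.mul_left (m : ℝ)) (fun n => mul_nonneg m.cast_nonneg (hΔ _ n.succ_pos))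
    fun n => (Finset.sum_nonneg fun i _ => hgap_nonneg n i).trans (hdecrease n)).tendsto_atTop_zero
  refine tendsto_pi_nhds.2 fun i => tendsto_zero_iff_norm_tendsto_zero.2 ?_
  refine StrictMonoOn.tendsto_zero_of_tendsto_comp (φ := fun t => c * φ t)
    (fun s hs t ht hst => mul_lt_mul_of_pos_left (hφ hs ht hst) hc) (by simp [hφ0])
    (fun n => norm_nonneg _) (squeeze_zero (hgap_nonneg · i) (fun n => ?_) hlim)
  exact (Finset.single_le_sum (fun j _ => hgap_nonneg n j) (Finset.mem_univ i)).trans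
    (hdecrease n)

end BlockDescent

section BlockGradient

variable {m : ℕ} {E : Fin m → Type*} [∀ i, NormedAddCommGroup (E i)]
  [∀ i, InnerProductSpace ℝ (E i)] [∀ i, CompleteSpace (E i)] {f : (∀ i, E i) → ℝ}

theorem continuous_gradi {Lf : ℝ} (hsmooth : ∀ x y : ∀ i, E i,
      √(∑ i, ‖gradi f x i - gradi f y i‖ ^ 2) ≤ Lf * √(∑ i, ‖x i - y i‖ ^ 2))
    (i : Fin m) : Continuous fun x => gradi f x i :=
  continuous_of_norm_sub_le_mul_sqrt_sum fun x y =>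
    (Real.le_sqrt_of_sq_le (Finset.single_le_sum (f := fun j => ‖gradi f x j - gradi f y j‖ ^ 2)
      (fun _ _ => sq_nonneg _) (Finset.mem_univ i))).trans (hsmooth x y)

theorem gradi_mixPt (θ : ℕ → ∀ i, E i) (n : ℕ) (i : Fin m) (v : E i) :
    gradi f (mixPt θ n i v) i = gradient (fun w => f (mixPt θ n i w)) v := by
  simp only [gradi, mixPt_update, mixPt_self]

variable {θ : ℕ → ∀ i, E i}

theorem gradient_eq_gradi_sweepPt {n : ℕ} {i : Fin m} {G : E i → ℝ} (hf : Differentiable ℝ f)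
    (hG : DifferentiableAt ℝ G (θ (n - 1) i)) (hmaj : ∀ v, f (mixPt θ n i v) ≤ G v)
    (hsharp : G (θ (n - 1) i) = f (mixPt θ n i (θ (n - 1) i))) :
    gradient G (θ (n - 1) i) = gradi f (sweepPt θ n i) i := by
  rw [← mixPt_prev, gradi_mixPt]
  exact gradient_eq_of_eventually_le_of_eq hG
    ((hf _).comp _ (hasFDerivAt_update _ _).differentiableAt) (Eventually.of_forall hmaj) hsharp

theorem tendsto_gradient_surrogate {g : ℕ → ∀ i : Fin m, E i → ℝ} {Lf Lg : ℝ}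
    (hf : Differentiable ℝ f)
    (hsmooth : ∀ x y : ∀ i, E i,
      √(∑ i, ‖gradi f x i - gradi f y i‖ ^ 2) ≤ Lf * √(∑ i, ‖x i - y i‖ ^ 2))
    (hmaj : ∀ n, 1 ≤ n → ∀ i, ∀ v : E i, f (mixPt θ n i v) ≤ g n i v)
    (hsharp : ∀ n, 1 ≤ n → ∀ i, g n i (θ (n - 1) i) = f (mixPt θ n i (θ (n - 1) i)))
    (hgdiff : ∀ n, 1 ≤ n → ∀ i, Differentiable ℝ (g n i))
    (hgLip : ∀ n, 1 ≤ n → ∀ i, ∀ u v : E i,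
      ‖gradient (g n i) u - gradient (g n i) v‖ ≤ Lg * ‖u - v‖)
    {ι : Type*} {l : Filter ι} {ν : ι → ℕ} (hν : ∀ᶠ k in l, 1 ≤ ν k) {θbar : ∀ i, E i}
    (hcurr : Tendsto (fun k => θ (ν k)) l (𝓝 θbar))
    (hprev : Tendsto (fun k => θ (ν k - 1)) l (𝓝 θbar))
    {i : Fin m} {x : ι → E i} (hx : Tendsto x l (𝓝 (θbar i))) :
    Tendsto (fun k => gradient (g (ν k) i) (x k)) l (𝓝 (gradi f θbar i)) := by
  have hanchor : Tendsto (fun k => gradi f (sweepPt θ (ν k) i) i) l (𝓝 (gradi f θbar i)) :=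
    ((continuous_gradi hsmooth i).tendsto θbar).comp (tendsto_sweepPt θ hcurr hprev i)
  have hbound : Tendsto (fun k => Lg * ‖x k - θ (ν k - 1) i‖) l (𝓝 0) := by
    simpa using (hx.sub (tendsto_pi_nhds.1 hprev i)).norm.const_mul Lg
  have hdiff : Tendsto (fun k => gradient (g (ν k) i) (x k) - gradi f (sweepPt θ (ν k) i) i)
      l (𝓝 0) := by
    refine tendsto_zero_iff_norm_tendsto_zero.2
      (squeeze_zero' (Eventually.of_forall fun k => norm_nonneg _) ?_ hbound)
    filter_upwards [hν] with k hk
    rw [← gradient_eq_gradi_sweepPt hf (hgdiff _ hk i _) (hmaj _ hk i) (hsharp _ hk i)]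
    exact hgLip _ hk i _ _
  simpa using hdiff.add hanchor

end BlockGradient

theorem bmm_many_blocks_limit_points_stationary_general {m : ℕ}
    {E : Fin m → Type*} [∀ i, NormedAddCommGroup (E i)]
    [∀ i, InnerProductSpace ℝ (E i)] [∀ i, FiniteDimensional ℝ (E i)]
    (Θ : ∀ i, Set (E i))
    (hclosed : ∀ i, IsClosed (Θ i)) (hconv : ∀ i, Convex ℝ (Θ i))
    (f : (∀ i, E i) → ℝ) (Lf : ℝ)
    (hdiff : Differentiable ℝ f)
    (hsmooth : ∀ x y : ∀ i, E i,
      Real.sqrt (∑ i, ‖gradi f x i - gradi f y i‖ ^ 2)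
        ≤ Lf * Real.sqrt (∑ i, ‖x i - y i‖ ^ 2))
    (fstar : ℝ) (hbdd : ∀ x, fstar ≤ f x)
    (θ : ℕ → ∀ i, E i) (hθ : ∀ n i, θ n i ∈ Θ i)
    (g : ℕ → ∀ i : Fin m, E i → ℝ) (Δ : ℕ → ℝ) (hΔ : ∀ n, 1 ≤ n → 0 ≤ Δ n)
    (hmaj : ∀ n, 1 ≤ n → ∀ i, ∀ v : E i, f (mixPt θ n i v) ≤ g n i v)
    (hsharp : ∀ n, 1 ≤ n → ∀ i, g n i (θ (n - 1) i) = f (mixPt θ n i (θ (n - 1) i)))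
    (hopt : ∀ n, 1 ≤ n → ∀ i, ∀ v ∈ Θ i, g n i (θ n i) ≤ g n i v + Δ n)
    (Lg : ℝ)
    (hgdiff : ∀ n, 1 ≤ n → ∀ i, Differentiable ℝ (g n i))
    (hgLip : ∀ n, 1 ≤ n → ∀ i, ∀ u v : E i,
      ‖gradient (g n i) u - gradient (g n i) v‖ ≤ Lg * ‖u - v‖)
    (c : ℝ) (hc : 0 < c)
    (φ : ℝ → ℝ) (hφ : StrictMonoOn φ (Set.Ici 0)) (hφ0 : φ 0 = 0)
    (hgap : ∀ n, 1 ≤ n → ∀ i, ∀ v : E i,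
      c * φ ‖v - θ (n - 1) i‖ ≤ g n i v - f (mixPt θ n i v))
    (hΔsum : Summable fun n => Δ (n + 1))
    (θstar : ℕ → ∀ i, E i)
    (hstarmem : ∀ n, 1 ≤ n → ∀ i, θstar n i ∈ Θ i)
    (hstarmin : ∀ n, 1 ≤ n → ∀ i, ∀ v ∈ Θ i, g n i (θstar n i) ≤ g n i v)
    (hstarclose : ∀ i, Tendsto (fun n => ‖θstar n i - θ n i‖) atTop (nhds 0)) :
    ∀ θbar : ∀ i, E i, MapClusterPt θbar atTop θ →
      (∀ i, θbar i ∈ Θ i) ∧ ∀ i, ∀ u ∈ Θ i, 0 ≤ ⟪gradi f θbar i, u - θbar i⟫ := by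
  intro θbar hcluster
  obtain ⟨ψ, hψ, hcurr⟩ : ∃ ψ : ℕ → ℕ, StrictMono ψ ∧ Tendsto (fun k => θ (ψ k)) atTop (𝓝 θbar) :=
    hcluster.tendsto_subseq
  refine ⟨fun i => (hclosed i).mem_of_tendsto (tendsto_pi_nhds.1 hcurr i)
    (Eventually.of_forall fun k => hθ _ i), fun i u hu => ?_⟩
  have hprev : Tendsto (fun k => θ (ψ k - 1)) atTop (𝓝 θbar) :=
    hcurr.comp_pred hψ.tendsto_atTop <| tendsto_succ_sub_of_gap hc hφ hφ0 hbdd hΔ hΔsum hsharp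
      (fun n hn i => hopt n hn i _ (hθ _ i)) hgap
  have hψ1 : ∀ᶠ k in atTop, 1 ≤ ψ k := hψ.tendsto_atTop.eventually_ge_atTop 1
  have hstar : Tendsto (fun k => θstar (ψ k) i) atTop (𝓝 (θbar i)) := by
    simpa using (tendsto_zero_iff_norm_tendsto_zero.2 ((hstarclose i).comp hψ.tendsto_atTop)).add
      (tendsto_pi_nhds.1 hcurr i)
  have hgrad := tendsto_gradient_surrogate hdiff hsmooth hmaj hsharp hgdiff hgLip hψ1 hcurr hprev
    hstar
  refine ge_of_tendsto (hgrad.inner (tendsto_const_nhds.sub hstar)) ?_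
  filter_upwards [hψ1] with k hk
  exact inner_gradient_sub_nonneg_of_isMinOn (hconv i) (hgdiff _ hk i _)
    (isMinOn_iff.2 (hstarmin _ hk i)) (hstarmem _ hk i) hu

/-- asymptotic convergence to stationary points, many blocks, smooth
distance-regularizing surrogates.  For a BMM sequence with `L_g`-smooth surrogates whose
majorization gaps satisfy `g_n^i(θ) - f_n^i(θ) ≥ c φ(‖θ - θ_{n-1}^i‖)` for a strictly
increasing `φ` with `φ(0) = 0`, summable optimality gaps, compact sublevel sets and exact
minimizers `θ_n^{i⋆}` with `‖θ_n^{i⋆} - θ_n^i‖ → 0`, every limit point of `(θ_n)` is a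
stationary point of `f` over `Θ`. -/
theorem bmm_many_blocks_limit_points_stationary {m : ℕ} (hm : 1 ≤ m)
    {E : Fin m → Type*} [∀ i, NormedAddCommGroup (E i)]
    [∀ i, InnerProductSpace ℝ (E i)] [∀ i, FiniteDimensional ℝ (E i)]
    (Θ : ∀ i, Set (E i)) (hne : ∀ i, (Θ i).Nonempty)
    (hclosed : ∀ i, IsClosed (Θ i)) (hconv : ∀ i, Convex ℝ (Θ i))
    (f : (∀ i, E i) → ℝ) (Lf : ℝ) (hLf : 0 < Lf)
    (hdiff : Differentiable ℝ f)
    (hsmooth : ∀ x y : ∀ i, E i,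
      Real.sqrt (∑ i, ‖gradi f x i - gradi f y i‖ ^ 2)
        ≤ Lf * Real.sqrt (∑ i, ‖x i - y i‖ ^ 2))
    (fstar : ℝ) (hbdd : ∀ x, fstar ≤ f x)
    (θ : ℕ → ∀ i, E i) (hθ : ∀ n i, θ n i ∈ Θ i)
    (g : ℕ → ∀ i : Fin m, E i → ℝ) (Δ : ℕ → ℝ) (hΔ : ∀ n, 1 ≤ n → 0 ≤ Δ n)
    (hmaj : ∀ n, 1 ≤ n → ∀ i, ∀ v : E i, f (mixPt θ n i v) ≤ g n i v)
    (hsharp : ∀ n, 1 ≤ n → ∀ i, g n i (θ (n - 1) i) = f (mixPt θ n i (θ (n - 1) i)))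
    (hopt : ∀ n, 1 ≤ n → ∀ i, ∀ v ∈ Θ i, g n i (θ n i) ≤ g n i v + Δ n)
    (Lg : ℝ) (hLg : 0 ≤ Lg)
    (hgdiff : ∀ n, 1 ≤ n → ∀ i, Differentiable ℝ (g n i))
    (hgLip : ∀ n, 1 ≤ n → ∀ i, ∀ u v : E i,
      ‖gradient (g n i) u - gradient (g n i) v‖ ≤ Lg * ‖u - v‖)
    (c : ℝ) (hc : 0 < c)
    (φ : ℝ → ℝ) (hφ : StrictMonoOn φ (Set.Ici 0)) (hφ0 : φ 0 = 0)
    (hgap : ∀ n, 1 ≤ n → ∀ i, ∀ v : E i,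
      c * φ ‖v - θ (n - 1) i‖ ≤ g n i v - f (mixPt θ n i v))
    (hΔsum : Summable fun n => Δ (n + 1))
    (hcompact : ∀ a : ℝ, IsCompact {x : ∀ i, E i | (∀ i, x i ∈ Θ i) ∧ f x ≤ a})
    (θstar : ℕ → ∀ i, E i)
    (hstarmem : ∀ n, 1 ≤ n → ∀ i, θstar n i ∈ Θ i)
    (hstarmin : ∀ n, 1 ≤ n → ∀ i, ∀ v ∈ Θ i, g n i (θstar n i) ≤ g n i v)
    (hstarclose : ∀ i, Tendsto (fun n => ‖θstar n i - θ n i‖) atTop (nhds 0)) :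
    ∀ θbar : ∀ i, E i, MapClusterPt θbar atTop θ →
      (∀ i, θbar i ∈ Θ i) ∧ ∀ i, ∀ u ∈ Θ i, 0 ≤ ⟪gradi f θbar i, u - θbar i⟫ :=
  bmm_many_blocks_limit_points_stationary_general Θ hclosed hconv f Lf hdiff hsmooth fstar hbdd θ hθ
    g Δ hΔ hmaj hsharp hopt Lg hgdiff hgLip c hc φ hφ hφ0 hgap hΔsum θstar hstarmem hstarmin
    hstarclose
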